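/- Let u₀ : ℝ → ℝ be a bounded Lebesgue-measurable function, and fix x < 0 and t > 0. Define J₂^ε(x,t) = (1/(2√(π ε t))) ∫₀^∞ exp( −(1/(2ε)) [ (x+ξ)²/(2t) + ∫₀^{−ξ} u₀(z) dz ] ) dξ for ε > 0. Then lim_{ε → 0⁺} [ −2ε · log J₂^ε(x,t) ] = min_{ξ ≥ 0} [ (x+ξ)²/(2t) + ∫₀^{−ξ} u₀(z) dz ], and this minimum is attained. -/

import Mathlib

/-!
Laplace's method. The phase `F ξ = (x + ξ)² / (2t) + ∫₀^{-ξ} u₀` is continuous and, `u₀` being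
bounded, grows quadratically; so it attains its minimum `m` on `[0, ∞)` and `e^{-F}` is integrable.
For `r ≥ 1`, `e^{-rF} ≤ e^{-(r-1)m} e^{-F}` bounds `∫ e^{-rF}` above by `C e^{-rm}`, and continuity
at the minimiser bounds it below by `d e^{-r(m+η)}` (integrate over a short interval to the right
of it). Hence `-(1/r) log ∫₀^∞ e^{-rF} → m` as `r → ∞`; take `r = 1/(2ε)`. The prefactor contributes
`-2ε log (1/(2√(πεt))) = ε log (4πtε) → 0`.
-/

open MeasureTheory Filter Real Set Topology

section ExponentialIntegral

variable {α : Type*} [MeasurableSpace α] {μ : Measure α} {F : α → ℝ} {m r : ℝ}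

lemma exp_neg_mul_le_of_le {y : ℝ} (hm : m ≤ y) (hr : 1 ≤ r) :
    exp (-r * y) ≤ exp (-(r - 1) * m) * exp (-y) := by
  rw [← exp_add]
  exact exp_le_exp.2 (by nlinarith)

lemma integrable_exp_neg_mul_of_le (hF : Measurable F) (hm : ∀ᵐ a ∂μ, m ≤ F a)
    (hint : Integrable (fun a => exp (-F a)) μ) (hr : 1 ≤ r) :
    Integrable (fun a => exp (-r * F a)) μ := by
  refine (hint.const_mul (exp (-(r - 1) * m))).mono'
    (hF.const_mul (-r)).exp.aestronglyMeasurable ?_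
  filter_upwards [hm] with a ha
  rw [norm_of_nonneg (exp_pos _).le]
  exact exp_neg_mul_le_of_le ha hr

lemma integral_exp_neg_mul_le_of_le (hF : Measurable F) (hm : ∀ᵐ a ∂μ, m ≤ F a)
    (hint : Integrable (fun a => exp (-F a)) μ) (hr : 1 ≤ r) :
    ∫ a, exp (-r * F a) ∂μ ≤ exp (-(r - 1) * m) * ∫ a, exp (-F a) ∂μ := by
  rw [← integral_const_mul]
  refine integral_mono_ae (integrable_exp_neg_mul_of_le hF hm hint hr)
    (hint.const_mul _) ?_
  filter_upwards [hm] with a ha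
  exact exp_neg_mul_le_of_le ha hr

end ExponentialIntegral

section Laplace

variable {F : ℝ → ℝ} {ξ₀ : ℝ}

lemma exists_pos_mul_exp_le_setIntegral_Ioi (hF : ContinuousAt F ξ₀) (hξ₀ : 0 ≤ ξ₀)
    {η : ℝ} (hη : 0 < η) :
    ∃ d > 0, ∀ r ≥ 0, IntegrableOn (fun ξ => exp (-r * F ξ)) (Ioi 0) →
      d * exp (-r * (F ξ₀ + η)) ≤ ∫ ξ in Ioi 0, exp (-r * F ξ) := by
  obtain ⟨d, hd, hnear⟩ := Metric.eventually_nhds_iff.1 (hF.eventually (gt_mem_nhds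
    (lt_add_of_pos_right (F ξ₀) hη)))
  refine ⟨d, hd, fun r hr hint => ?_⟩
  have hsub : Ioo ξ₀ (ξ₀ + d) ⊆ Ioi 0 := fun ξ hξ => hξ₀.trans_lt hξ.1
  calc d * exp (-r * (F ξ₀ + η)) = ∫ _ in Ioo ξ₀ (ξ₀ + d), exp (-r * (F ξ₀ + η)) := by
        rw [setIntegral_const, measureReal_def, volume_Ioo, add_sub_cancel_left,
          ENNReal.toReal_ofReal hd.le, smul_eq_mul]
    _ ≤ ∫ ξ in Ioo ξ₀ (ξ₀ + d), exp (-r * F ξ) := by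
        refine setIntegral_mono_on (integrableOn_const measure_Ioo_lt_top.ne)
          (hint.mono_set hsub) measurableSet_Ioo fun ξ hξ => ?_
        have hdist : dist ξ ξ₀ < d := by
          rw [dist_eq, abs_of_pos (sub_pos.2 hξ.1)]
          linarith [hξ.2]
        exact exp_le_exp.2 (by nlinarith [hnear hdist])
    _ ≤ ∫ ξ in Ioi 0, exp (-r * F ξ) :=
        setIntegral_mono_set hint (ae_of_all _ fun _ => (exp_pos _).le) hsub.eventuallyLE

lemma setIntegral_exp_pos_Ioi (hint : IntegrableOn (fun ξ => exp (F ξ)) (Ioi 0)) :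
    0 < ∫ ξ in Ioi 0, exp (F ξ) := by
  have : NeZero (volume.restrict (Ioi (0 : ℝ))) := ⟨by simp⟩
  exact integral_exp_pos hint

lemma tendsto_sub_div_atTop (L c : ℝ) : Tendsto (fun r => L - c / r) atTop (𝓝 L) := by
  simpa using
    (tendsto_const_nhds (x := L)).sub ((tendsto_const_nhds (x := c)).div_atTop tendsto_id)

theorem tendsto_neg_inv_mul_log_setIntegral_exp_neg_mul (hF : Measurable F)
    (hFξ₀ : ContinuousAt F ξ₀) (hξ₀ : ξ₀ ∈ Ici 0) (hmin : IsMinOn F (Ici 0) ξ₀)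
    (hint : IntegrableOn (fun ξ => exp (-F ξ)) (Ioi 0)) :
    Tendsto (fun r => -r⁻¹ * log (∫ ξ in Ioi 0, exp (-r * F ξ))) atTop (𝓝 (F ξ₀)) := by
  have hm : ∀ᵐ ξ ∂volume.restrict (Ioi 0), F ξ₀ ≤ F ξ :=
    ae_restrict_of_forall_mem measurableSet_Ioi fun ξ hξ =>
      isMinOn_iff.1 hmin ξ (mem_Ici.2 (le_of_lt hξ))
  have hintr : ∀ r ≥ (1 : ℝ), IntegrableOn (fun ξ => exp (-r * F ξ)) (Ioi 0) :=
    fun r hr => integrable_exp_neg_mul_of_le hF hm hint hr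
  have hpos : ∀ r ≥ (1 : ℝ), 0 < ∫ ξ in Ioi 0, exp (-r * F ξ) :=
    fun r hr => setIntegral_exp_pos_Ioi (hintr r hr)
  set J := ∫ ξ in Ioi 0, exp (-F ξ)
  have hJ : 0 < J := setIntegral_exp_pos_Ioi hint
  refine tendsto_order.2 ⟨fun a ha => ?_, fun b hb => ?_⟩
  · filter_upwards [(tendsto_sub_div_atTop (F ξ₀) (F ξ₀ + log J)).eventually (lt_mem_nhds ha),
      eventually_ge_atTop 1] with r har hr
    have hlog := log_le_log (hpos r hr) (integral_exp_neg_mul_le_of_le hF hm hint hr)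
    rw [log_mul (exp_pos _).ne' hJ.ne', log_exp] at hlog
    calc a < F ξ₀ - (F ξ₀ + log J) / r := har
      _ = -r⁻¹ * (-(r - 1) * F ξ₀ + log J) := by field_simp; ring
      _ ≤ -r⁻¹ * log (∫ ξ in Ioi 0, exp (-r * F ξ)) :=
        mul_le_mul_of_nonpos_left hlog (neg_nonpos.2 (inv_nonneg.2 (by linarith)))
  · obtain ⟨η, hη, hηb⟩ : ∃ η > 0, F ξ₀ + η < b :=
      ⟨(b - F ξ₀) / 2, by linarith, by linarith⟩
    obtain ⟨d, hd, hlower⟩ := exists_pos_mul_exp_le_setIntegral_Ioi hFξ₀ hξ₀ hη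
    filter_upwards [(tendsto_sub_div_atTop (F ξ₀ + η) (log d)).eventually (gt_mem_nhds hηb),
      eventually_ge_atTop 1] with r hrb hr
    have hlog := log_le_log (by positivity) (hlower r (by linarith) (hintr r hr))
    rw [log_mul hd.ne' (exp_pos _).ne', log_exp] at hlog
    calc -r⁻¹ * log (∫ ξ in Ioi 0, exp (-r * F ξ)) ≤ -r⁻¹ * (log d + -r * (F ξ₀ + η)) :=
        mul_le_mul_of_nonpos_left hlog (neg_nonpos.2 (inv_nonneg.2 (by linarith)))
      _ = F ξ₀ + η - log d / r := by field_simp; ring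
      _ < b := hrb

end Laplace

section QuadraticGrowth

variable {F : ℝ → ℝ} {a β : ℝ}

lemma tendsto_cocompact_atTop_of_sq_le (ha : 0 < a) (h : ∀ ξ, a * ξ ^ 2 - β ≤ F ξ) :
    Tendsto F (cocompact ℝ) atTop := by
  have hsq : Tendsto (fun ξ : ℝ => a * ‖ξ‖ ^ 2 - β) (cocompact ℝ) atTop :=
    tendsto_atTop_add_const_right _ _
      (((tendsto_pow_atTop two_ne_zero).comp tendsto_norm_cocompact_atTop).const_mul_atTop ha)
  exact tendsto_atTop_mono (fun ξ => by simpa only [norm_eq_abs, sq_abs] using h ξ) hsq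

lemma integrable_exp_neg_mul_of_sq_le (hF : Measurable F) (ha : 0 < a)
    (h : ∀ ξ, a * ξ ^ 2 - β ≤ F ξ) {r : ℝ} (hr : 0 < r) :
    Integrable (fun ξ => exp (-r * F ξ)) := by
  refine ((integrable_exp_neg_mul_sq (mul_pos hr ha)).const_mul (exp (r * β))).mono'
    (hF.const_mul (-r)).exp.aestronglyMeasurable (ae_of_all _ fun ξ => ?_)
  rw [norm_of_nonneg (exp_pos _).le, ← exp_add]
  exact exp_le_exp.2 (by nlinarith [h ξ])

end QuadraticGrowth

lemma tendsto_neg_two_mul_mul_log_one_div_two_mul_sqrt {t : ℝ} (ht : 0 < t) :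
    Tendsto (fun ε => -2 * ε * log (1 / (2 * √(π * ε * t)))) (𝓝[>] 0) (𝓝 0) := by
  have hcont : Continuous fun ε => ε * log ε + ε * log (4 * π * t) :=
    continuous_mul_log.add (continuous_id.mul continuous_const)
  refine Tendsto.congr' ?_ ((hcont.tendsto' 0 0 (by simp)).mono_left nhdsWithin_le_nhds)
  filter_upwards [self_mem_nhdsWithin] with ε (hε : 0 < ε)
  rw [one_div, log_inv, log_mul two_ne_zero (by positivity), log_sqrt (by positivity),
    show π * ε * t = (4 * π * t) * ε / 4 by ring, log_div (by positivity) (by norm_num),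
    log_mul (by positivity) hε.ne', show (4 : ℝ) = 2 ^ 2 by norm_num, log_pow]
  ring

noncomputable def j2Phase (u₀ : ℝ → ℝ) (x t ξ : ℝ) : ℝ :=
  (x + ξ) ^ 2 / (2 * t) + ∫ z in (0 : ℝ)..(-ξ), u₀ z

section Phase

variable {u₀ : ℝ → ℝ} {M : ℝ}

lemma continuous_j2Phase (hmeas : Measurable u₀) (hbdd : ∀ y, |u₀ y| ≤ M) (x t : ℝ) :
    Continuous (j2Phase u₀ x t) := by
  have hint : ∀ a b : ℝ, IntervalIntegrable u₀ volume a b := fun a b =>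
    intervalIntegrable_iff.2 (Measure.integrableOn_of_bounded measure_Ioc_lt_top.ne
      hmeas.aestronglyMeasurable (ae_of_all _ hbdd))
  exact (((continuous_const.add continuous_id).pow 2).div_const _).add
    ((intervalIntegral.continuous_primitive hint 0).comp continuous_neg)

lemma sq_le_j2Phase (hbdd : ∀ y, |u₀ y| ≤ M) (x : ℝ) {t : ℝ} (ht : 0 < t) (ξ : ℝ) :
    1 / (8 * t) * ξ ^ 2 - (x ^ 2 / (2 * t) + 2 * t * M ^ 2) ≤ j2Phase u₀ x t ξ := by
  have hprim : -(M * |ξ|) ≤ ∫ z in (0 : ℝ)..(-ξ), u₀ z := by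
    have := intervalIntegral.norm_integral_le_of_norm_le_const (a := 0) (b := -ξ)
      (fun y _ => (norm_eq_abs (u₀ y)).trans_le (hbdd y))
    rw [sub_zero, abs_neg] at this
    exact neg_le_of_abs_le this
  have hsq : 1 / (8 * t) * ξ ^ 2 - (x ^ 2 / (2 * t) + 2 * t * M ^ 2) + M * |ξ|
      ≤ (x + ξ) ^ 2 / (2 * t) := by
    rw [← sub_nonneg]
    have key : (x + ξ) ^ 2 / (2 * t) - (1 / (8 * t) * ξ ^ 2 - (x ^ 2 / (2 * t) + 2 * t * M ^ 2)
        + M * |ξ|) = (2 * (ξ + 2 * x) ^ 2 + (|ξ| - 4 * t * M) ^ 2) / (8 * t) := by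
      field_simp
      linear_combination (-2) * sq_abs ξ
    rw [key]
    positivity
  unfold j2Phase
  linarith

end Phase

theorem limit_J2_general (u₀ : ℝ → ℝ) (hmeas : Measurable u₀) (M : ℝ) (hbdd : ∀ y : ℝ, |u₀ y| ≤ M)
    (x t : ℝ) (ht : 0 < t) :
    ∃ ξ₀ ∈ Set.Ici (0 : ℝ),
      (∀ ξ ∈ Set.Ici (0 : ℝ),
        (x + ξ₀) ^ 2 / (2 * t) + (∫ z in (0 : ℝ)..(-ξ₀), u₀ z)
          ≤ (x + ξ) ^ 2 / (2 * t) + ∫ z in (0 : ℝ)..(-ξ), u₀ z) ∧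
      Tendsto (fun ε : ℝ =>
          -2 * ε * Real.log ((1 / (2 * Real.sqrt (Real.pi * ε * t))) *
            ∫ ξ in Set.Ioi (0 : ℝ),
              Real.exp (-(1 / (2 * ε)) *
                ((x + ξ) ^ 2 / (2 * t) + ∫ z in (0 : ℝ)..(-ξ), u₀ z))))
        (nhdsWithin 0 (Set.Ioi 0))
        (nhds ((x + ξ₀) ^ 2 / (2 * t) + ∫ z in (0 : ℝ)..(-ξ₀), u₀ z)) := by
  have hcont := continuous_j2Phase hmeas hbdd x t
  have hgrowth := sq_le_j2Phase hbdd x ht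
  have ha : (0 : ℝ) < 1 / (8 * t) := by positivity
  have hint := fun r (hr : 0 < r) =>
    (integrable_exp_neg_mul_of_sq_le hcont.measurable ha hgrowth hr).integrableOn (s := Ioi 0)
  obtain ⟨ξ₀, hξ₀, hmin⟩ := hcont.continuousOn.exists_isMinOn' isClosed_Ici self_mem_Ici
    (((tendsto_cocompact_atTop_of_sq_le ha hgrowth).eventually
      (eventually_ge_atTop _)).filter_mono inf_le_left)
  refine ⟨ξ₀, hξ₀, isMinOn_iff.1 hmin, ?_⟩
  have hlaplace := (tendsto_neg_inv_mul_log_setIntegral_exp_neg_mul hcont.measurable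
    hcont.continuousAt hξ₀ hmin (by simpa using hint 1 one_pos)).comp
    ((tendsto_inv_nhdsGT_zero.const_mul_atTop one_half_pos).congr fun ε => by ring :
      Tendsto (fun ε : ℝ => 1 / (2 * ε)) (𝓝[>] 0) atTop)
  have hsum := (tendsto_neg_two_mul_mul_log_one_div_two_mul_sqrt ht).add hlaplace
  rw [zero_add] at hsum
  refine hsum.congr' ?_
  filter_upwards [self_mem_nhdsWithin] with ε (hε : 0 < ε)
  have hI := setIntegral_exp_pos_Ioi (hint (1 / (2 * ε)) (by positivity))
  unfold j2Phase at hI ⊢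
  rw [Function.comp_apply, inv_div, div_one, log_mul (by positivity) hI.ne']
  ring

/-- **Vanishing-viscosity limit of `J₂^ε` (the `U_L³` component of Theorem 3.1).**
For bounded measurable `u₀`, `x < 0`, `t > 0`, the function
`ξ ↦ (x+ξ)²/(2t) + ∫₀^{-ξ} u₀` attains its minimum over `[0,∞)` at some `ξ₀`, and
`-2ε log J₂^ε(x,t) → (x+ξ₀)²/(2t) + ∫₀^{-ξ₀} u₀` as `ε → 0⁺`, where
`J₂^ε(x,t) = (1/(2√(πεt))) ∫₀^∞ exp(-(1/2ε)[(x+ξ)²/(2t) + ∫₀^{-ξ} u₀]) dξ`. -/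
theorem limit_J2 (u₀ : ℝ → ℝ) (hmeas : Measurable u₀) (M : ℝ) (hbdd : ∀ y : ℝ, |u₀ y| ≤ M)
    (x t : ℝ) (hx : x < 0) (ht : 0 < t) :
    ∃ ξ₀ ∈ Set.Ici (0 : ℝ),
      (∀ ξ ∈ Set.Ici (0 : ℝ),
        (x + ξ₀) ^ 2 / (2 * t) + (∫ z in (0 : ℝ)..(-ξ₀), u₀ z)
          ≤ (x + ξ) ^ 2 / (2 * t) + ∫ z in (0 : ℝ)..(-ξ), u₀ z) ∧
      Tendsto (fun ε : ℝ =>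
          -2 * ε * Real.log ((1 / (2 * Real.sqrt (Real.pi * ε * t))) *
            ∫ ξ in Set.Ioi (0 : ℝ),
              Real.exp (-(1 / (2 * ε)) *
                ((x + ξ) ^ 2 / (2 * t) + ∫ z in (0 : ℝ)..(-ξ), u₀ z))))
        (nhdsWithin 0 (Set.Ioi 0))
        (nhds ((x + ξ₀) ^ 2 / (2 * t) + ∫ z in (0 : ℝ)..(-ξ₀), u₀ z)) :=
  limit_J2_general u₀ hmeas M hbdd x t ht
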